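/- Let M be a p × q matrix whose entries are polynomials in MvPolynomial (Fin k) ℂ, and let K be the fraction field of MvPolynomial (Fin k) ℂ. Then there exists an integer point a : Fin k → ℤ such that the rank (over ℂ) of the matrix obtained by evaluating every entry of M at the complex point (fun i => (a i : ℂ)) equals the rank (over K) of M viewed as a matrix over K. -/

import Mathlib

/-!
Over a field the rank is the size of the largest nonvanishing minor. Take a minor of `M` over the
fraction field that is nonzero and of size its rank: its determinant is a nonzero polynomial, and
a polynomial vanishing on all of `ℤᵏ` is zero, so it survives evaluation at some integer point.
Conversely evaluation can never raise the rank, since a nonvanishing minor of the evaluated matrix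
comes from a nonzero polynomial minor of `M`.
-/

namespace MvPolynomial

theorem exists_int_eval_ne_zero {σ R : Type*} [CommRing R] [IsDomain R] [CharZero R]
    {P : MvPolynomial σ R} (hP : P ≠ 0) : ∃ a : σ → ℤ, eval (fun i ↦ (a i : R)) P ≠ 0 := by
  by_contra! h
  refine hP (funext_set (fun _ ↦ Set.range ((↑) : ℤ → R))
    (fun _ ↦ Set.infinite_range_of_injective Int.cast_injective) fun x hx ↦ ?_)
  choose a ha using fun i ↦ hx i (Set.mem_univ i)
  obtain rfl : (fun i ↦ (a i : R)) = x := _root_.funext ha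
  rw [h a, map_zero]

end MvPolynomial

namespace Matrix

theorem det_submatrix_map {m n R S : Type*} [CommRing R] [CommRing S] (f : R →+* S)
    (A : Matrix m n R) {o : Type*} [Fintype o] [DecidableEq o] (r : o → m) (c : o → n) :
    ((A.map f).submatrix r c).det = f (A.submatrix r c).det := by
  rw [submatrix_map, RingHom.map_det, RingHom.mapMatrix_apply]

variable {m n : Type*} [Fintype m] [Fintype n]

omit [Fintype m] in
theorem card_le_rank_of_det_submatrix_ne_zero {R : Type*} [CommRing R] [IsDomain R]
    {o : Type*} [Fintype o] [DecidableEq o] (A : Matrix m n R) (r : o → m) (c : o → n)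
    (h : (A.submatrix r c).det ≠ 0) : Fintype.card o ≤ A.rank :=
  rank_of_det_ne_zero h ▸ rank_submatrix_le A r c

variable {F : Type*} [Field F]

theorem exists_linearIndependent_col_comp_of_rank_eq {s : ℕ} (A : Matrix m n F)
    (hs : A.rank = s) : ∃ c : Fin s → n, LinearIndependent F (A.col ∘ c) := by
  rw [rank_eq_finrank_span_cols] at hs
  subst hs
  obtain ⟨v, hv, -, hli⟩ := Submodule.exists_fun_fin_finrank_span_eq F (Set.range A.col)
  choose c hc using hv
  exact ⟨c, (_root_.funext hc : A.col ∘ c = v) ▸ hli⟩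

theorem exists_det_submatrix_ne_zero (A : Matrix m n F) :
    ∃ (r : Fin A.rank → m) (c : Fin A.rank → n), (A.submatrix r c).det ≠ 0 := by
  obtain ⟨c, hc⟩ := A.exists_linearIndependent_col_comp_of_rank_eq rfl
  have hrank : (A.submatrix id c)ᵀ.rank = A.rank := by
    rw [LinearIndependent.rank_matrix (M := (A.submatrix id c)ᵀ) hc, Fintype.card_fin]
  obtain ⟨r, hr⟩ := (A.submatrix id c)ᵀ.exists_linearIndependent_col_comp_of_rank_eq hrank
  exact ⟨r, c, ((isUnit_iff_isUnit_det _).mp (linearIndependent_rows_iff_isUnit.mp hr)).ne_zero⟩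

theorem rank_map_le_of_injective {R L : Type*} [CommRing R] [Field L] (φ : R →+* F)
    {ψ : R →+* L} (hψ : Function.Injective ψ) (A : Matrix m n R) :
    (A.map φ).rank ≤ (A.map ψ).rank := by
  obtain ⟨r, c, h⟩ := (A.map φ).exists_det_submatrix_ne_zero
  simpa using (A.map ψ).card_le_rank_of_det_submatrix_ne_zero r c <| by
    rw [det_submatrix_map] at h ⊢
    exact (map_ne_zero_iff ψ hψ).mpr (ne_zero_of_map h)

end Matrix

/-- There is an integer point at which evaluating a symbolic complex matrix
preserves its rank. -/
theorem exists_int_point_rank_preserving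
    {p q k : ℕ}
    (M : Matrix (Fin p) (Fin q) (MvPolynomial (Fin k) ℂ)) :
    ∃ a : Fin k → ℤ,
      (M.map (MvPolynomial.eval (fun i => (a i : ℂ)))).rank =
        (M.map (algebraMap (MvPolynomial (Fin k) ℂ)
          (FractionRing (MvPolynomial (Fin k) ℂ)))).rank := by
  obtain ⟨r, c, hK⟩ := (M.map (algebraMap (MvPolynomial (Fin k) ℂ)
    (FractionRing (MvPolynomial (Fin k) ℂ)))).exists_det_submatrix_ne_zero
  rw [Matrix.det_submatrix_map] at hK
  obtain ⟨a, ha⟩ := MvPolynomial.exists_int_eval_ne_zero (ne_zero_of_map hK)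
  refine ⟨a, le_antisymm (Matrix.rank_map_le_of_injective _ (IsFractionRing.injective _ _) M) ?_⟩
  simpa using (M.map (MvPolynomial.eval fun i ↦ (a i : ℂ))).card_le_rank_of_det_submatrix_ne_zero
    r c (by rwa [Matrix.det_submatrix_map])
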